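/- Let ω ⊂ ℝ² be a bounded domain and θ : closure(ω) → ℝ³ an injective C³ mapping with a_α := ∂_α θ linearly independent on closure(ω). With a₃ := (a₁ × a₂)/|a₁ × a₂|, (a^α) the contravariant tangent basis (a^α · a_β = δ^α_β), a^{αβ} := a^α · a^β, b_{αβ} := a₃ · ∂_β a_α, b^σ_α := a^{στ} b_{τα}, Γ^σ_{αβ} := a^σ · ∂_β a_α, and b^σ_{β|α} := ∂_α b^σ_β + Γ^σ_{ατ} b^τ_β − Γ^τ_{αβ} b^σ_τ, let η = (η₁, η₂, η₃) be a C² vector field on closure(ω) satisfying γ_{αβ}(η) := (1/2)(∂_β η_α + ∂_α η_β) − Γ^σ_{αβ} η_σ − b_{αβ} η₃ = 0 in ω. For ε > 0 and (y, x₃) ∈ ω × (−1, 1) define v_α(ε)(y, x₃) := η_α(y) − ε x₃ θ_α(y) with θ_α := ∂_α η₃ + 2 b^σ_α η_σ, and v₃(ε)(y, x₃) := η₃(y). Then at every point of ω × (−1,1): (1/ε) γ_{αβ}(v(ε)) + x₃ b^σ_{β|α} v_σ(ε) + x₃ b^σ_α b_{σβ} v₃(ε) = − x₃ ρ_{αβ}(η)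 − ε x₃² b^σ_{β|α} θ_σ, where ρ_{αβ}(η) := ∂_α∂_β η₃ − Γ^σ_{αβ} ∂_σ η₃ − b^σ_α b_{σβ} η₃ + b^σ_α (∂_β η_σ − Γ^τ_{βσ} η_τ) + b^τ_β (∂_α η_τ − Γ^σ_{ατ} η_σ) + b^τ_{β|α} η_τ, and γ_{αβ}(v(ε)) is computed by the same formula as γ_{αβ}(η) applied pointwise in y for each fixed x₃. -/

import Mathlib

/-!
Since `γ(η) = 0` and the change of metric is linear in the tangential field, `(1/ε) γ(v(ε))`
equals `-x₃` times the change of metric of the rotation field `θ_α` with no normal component.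
The identity then amounts to `γ⁰_{αβ}(θ) = ρ_{αβ}(η) + b^σ_{β|α} η_σ + b^σ_α b_{σβ} η₃`, which
after expanding `∂_β θ_α` only needs the symmetry of the Hessian of `η₃` and the
Codazzi–Mainardi equations `b^τ_{β|α} = b^τ_{α|β}`. These follow from the Weingarten formula
`∂_β a₃ = -b^σ_β a_σ`: it gives `∂_α b^τ_β + Γ^τ_{ασ} b^σ_β = -a^τ · ∂_α∂_β a₃`, whose
right-hand side is symmetric in `α, β`.
-/

open Set Matrix

theorem eq_zero_of_dotProduct_eq_zero_of_crossProduct_ne_zero {R : Type*} [Field R] [LinearOrder R]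
    [IsStrictOrderedRing R] {u v w : Fin 3 → R} (hu : u ⬝ᵥ w = 0) (hv : v ⬝ᵥ w = 0)
    (huv : u ⨯₃ v ⬝ᵥ w = 0) (h : u ⨯₃ v ≠ 0) : w = 0 := by
  have hcross : u ⨯₃ v ⨯₃ w = 0 := by rw [cross_cross_eq_smul_sub_smul, hu, hv]; simp
  have hlag := cross_dot_cross (u ⨯₃ v) w (u ⨯₃ v) w
  rw [hcross, zero_dotProduct, huv, zero_mul, sub_zero, eq_comm, mul_eq_zero] at hlag
  exact dotProduct_self_eq_zero.1 (hlag.resolve_left (mt dotProduct_self_eq_zero.1 h))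

section Calculus

variable {𝕜 E ι : Type*} [NontriviallyNormedField 𝕜] [NormedAddCommGroup E] [NormedSpace 𝕜 E]
  [Fintype ι] {f g : E → ι → 𝕜} {x : E} {n : WithTop ℕ∞}

theorem fderiv_dotProduct (hf : DifferentiableAt 𝕜 f x) (hg : DifferentiableAt 𝕜 g x) (v : E) :
    fderiv 𝕜 (fun z => f z ⬝ᵥ g z) x v = fderiv 𝕜 f x v ⬝ᵥ g x + f x ⬝ᵥ fderiv 𝕜 g x v := by
  have hfi (i : ι) : DifferentiableAt 𝕜 (fun z => f z i) x := by fun_prop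
  have hgi (i : ι) : DifferentiableAt 𝕜 (fun z => g z i) x := by fun_prop
  simp only [dotProduct, ← Finset.sum_add_distrib]
  rw [fderiv_fun_sum fun i _ => (hfi i).fun_mul (hgi i), _root_.sum_apply]
  refine Finset.sum_congr rfl fun i _ => ?_
  simp only [fderiv_fun_mul (hfi i) (hgi i), fderiv_apply hg, fderiv_apply hf, _root_.add_apply,
    _root_.smul_apply, ContinuousLinearMap.comp_apply, ContinuousLinearMap.proj_apply, smul_eq_mul]
  ring

theorem ContDiffAt.dotProduct (hf : ContDiffAt 𝕜 n f x) (hg : ContDiffAt 𝕜 n g x) :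
    ContDiffAt 𝕜 n (fun z => f z ⬝ᵥ g z) x := by
  have hfi (i : ι) : ContDiffAt 𝕜 n (fun z => f z i) x := contDiffAt_pi.1 hf i
  have hgi (i : ι) : ContDiffAt 𝕜 n (fun z => g z i) x := contDiffAt_pi.1 hg i
  unfold _root_.dotProduct
  exact ContDiffAt.sum fun i _ => (hfi i).mul (hgi i)

theorem ContDiffAt.crossProduct {f g : E → Fin 3 → 𝕜} (hf : ContDiffAt 𝕜 n f x)
    (hg : ContDiffAt 𝕜 n g x) : ContDiffAt 𝕜 n (fun z => f z ⨯₃ g z) x := by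
  have hfi (i : Fin 3) : ContDiffAt 𝕜 n (fun z => f z i) x := contDiffAt_pi.1 hf i
  have hgi (i : Fin 3) : ContDiffAt 𝕜 n (fun z => g z i) x := contDiffAt_pi.1 hg i
  refine contDiffAt_pi.2 fun i => ?_
  fin_cases i <;>
    simp only [cross_apply, Fin.zero_eta, Fin.mk_one, Fin.reduceFinMk, cons_val_zero, cons_val_one,
      cons_val] <;>
    fun_prop

end Calculus

theorem fderiv_fderiv_comm {E F : Type*} [NormedAddCommGroup E] [NormedSpace ℝ E]
    [NormedAddCommGroup F] [NormedSpace ℝ F] {f : E → F} {x : E} (hf : ContDiffAt ℝ 2 f x)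
    (v w : E) :
    fderiv ℝ (fun z => fderiv ℝ f z v) x w = fderiv ℝ (fun z => fderiv ℝ f z w) x v := by
  have hd : DifferentiableAt ℝ (fderiv ℝ f) x :=
    (hf.fderiv_right (m := 1) le_rfl).differentiableAt one_ne_zero
  have happly (u : E) :
      fderiv ℝ (fun z => fderiv ℝ f z u) x = (fderiv ℝ (fderiv ℝ f) x).flip u := by
    simpa using fderiv_clm_apply hd (differentiableAt_const u)
  rw [happly, happly]
  exact hf.isSymmSndFDerivAt (by simp) w v

namespace MiddleSurface

open Filter Topology

noncomputable section

variable (θ : (Fin 2 → ℝ) → Fin 3 → ℝ)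

def covBasis (α : Fin 2) (y : Fin 2 → ℝ) : Fin 3 → ℝ := fderiv ℝ θ y (Pi.single α 1)

def areaNormal (y : Fin 2 → ℝ) : Fin 3 → ℝ := covBasis θ 0 y ⨯₃ covBasis θ 1 y

def unitNormal (y : Fin 2 → ℝ) : Fin 3 → ℝ :=
  (√(∑ i, areaNormal θ y i ^ 2))⁻¹ • areaNormal θ y

def metric (y : Fin 2 → ℝ) : Matrix (Fin 2) (Fin 2) ℝ :=
  Matrix.of fun α β => covBasis θ α y ⬝ᵥ covBasis θ β y

def contraBasis (σ : Fin 2) (y : Fin 2 → ℝ) : Fin 3 → ℝ :=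
  ∑ τ, (metric θ y)⁻¹ σ τ • covBasis θ τ y

def contraMetric (y : Fin 2 → ℝ) (σ τ : Fin 2) : ℝ := contraBasis θ σ y ⬝ᵥ contraBasis θ τ y

def curvature (y : Fin 2 → ℝ) (α β : Fin 2) : ℝ :=
  unitNormal θ y ⬝ᵥ fderiv ℝ (covBasis θ α) y (Pi.single β 1)

def mixedCurvature (y : Fin 2 → ℝ) (σ α : Fin 2) : ℝ :=
  ∑ τ, contraMetric θ y σ τ * curvature θ y τ α

def christoffel (y : Fin 2 → ℝ) (σ α β : Fin 2) : ℝ :=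
  contraBasis θ σ y ⬝ᵥ fderiv ℝ (covBasis θ α) y (Pi.single β 1)

def covDerivMixedCurvature (y : Fin 2 → ℝ) (σ β α : Fin 2) : ℝ :=
  fderiv ℝ (fun z => mixedCurvature θ z σ β) y (Pi.single α 1)
    + (∑ τ, christoffel θ y σ α τ * mixedCurvature θ y τ β)
    - ∑ τ, christoffel θ y τ α β * mixedCurvature θ y σ τ

variable (η : Fin 2 → (Fin 2 → ℝ) → ℝ) (η₃ : (Fin 2 → ℝ) → ℝ)

def changeOfMetric (y : Fin 2 → ℝ) (α β : Fin 2) : ℝ :=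
  (1 / 2) * (fderiv ℝ (η α) y (Pi.single β 1) + fderiv ℝ (η β) y (Pi.single α 1))
    - (∑ σ, christoffel θ y σ α β * η σ y) - curvature θ y α β * η₃ y

def rotation (α : Fin 2) (y : Fin 2 → ℝ) : ℝ :=
  fderiv ℝ η₃ y (Pi.single α 1) + 2 * ∑ σ, mixedCurvature θ y σ α * η σ y

def changeOfCurvature (y : Fin 2 → ℝ) (α β : Fin 2) : ℝ :=
  fderiv ℝ (fun z => fderiv ℝ η₃ z (Pi.single β 1)) y (Pi.single α 1)
    - (∑ σ, christoffel θ y σ α β * fderiv ℝ η₃ y (Pi.single σ 1))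
    - (∑ σ, mixedCurvature θ y σ α * curvature θ y σ β) * η₃ y
    + (∑ σ, mixedCurvature θ y σ α
        * (fderiv ℝ (η σ) y (Pi.single β 1) - ∑ τ, christoffel θ y τ β σ * η τ y))
    + (∑ τ, mixedCurvature θ y τ β
        * (fderiv ℝ (η τ) y (Pi.single α 1) - ∑ σ, christoffel θ y σ α τ * η σ y))
    + ∑ τ, covDerivMixedCurvature θ y τ β α * η τ y

variable {θ η η₃} {y : Fin 2 → ℝ} {n : WithTop ℕ∞}

theorem sum_sq_areaNormal_pos (hy : areaNormal θ y ≠ 0) : 0 < ∑ i, areaNormal θ y i ^ 2 := by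
  have : ∑ i, areaNormal θ y i ^ 2 = areaNormal θ y ⬝ᵥ areaNormal θ y := by
    simp [dotProduct, sq]
  rw [this]
  exact lt_of_le_of_ne (dotProduct_self_star_nonneg _) (Ne.symm (mt dotProduct_self_eq_zero.1 hy))

theorem contDiffAt_covBasis (hθ : ContDiffAt ℝ (n + 1) θ y) (α : Fin 2) :
    ContDiffAt ℝ n (covBasis θ α) y :=
  (hθ.fderiv_right le_rfl).clm_apply contDiffAt_const

theorem contDiffAt_areaNormal (hθ : ContDiffAt ℝ (n + 1) θ y) :
    ContDiffAt ℝ n (areaNormal θ) y :=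
  (contDiffAt_covBasis hθ 0).crossProduct (contDiffAt_covBasis hθ 1)

theorem contDiffAt_unitNormal (hθ : ContDiffAt ℝ (n + 1) θ y) (hy : areaNormal θ y ≠ 0) :
    ContDiffAt ℝ n (unitNormal θ) y := by
  have hN := contDiffAt_areaNormal hθ
  have hs : ContDiffAt ℝ n (fun z => ∑ i, areaNormal θ z i ^ 2) y :=
    ContDiffAt.sum fun i _ => (contDiffAt_pi.1 hN i).pow 2
  have hpos := sum_sq_areaNormal_pos hy
  exact ((hs.sqrt hpos.ne').inv (Real.sqrt_pos.2 hpos).ne').smul hN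

theorem eventually_areaNormal_ne_zero (hθ : ContDiffAt ℝ 1 θ y) (hy : areaNormal θ y ≠ 0) :
    ∀ᶠ z in 𝓝 y, areaNormal θ z ≠ 0 :=
  (contDiffAt_areaNormal (n := 0) hθ).continuousAt.eventually_ne hy

theorem isSymm_metric (y : Fin 2 → ℝ) : (metric θ y).IsSymm :=
  Matrix.IsSymm.ext fun α β => dotProduct_comm (covBasis θ β y) (covBasis θ α y)

theorem det_metric (y : Fin 2 → ℝ) :
    (metric θ y).det = areaNormal θ y ⬝ᵥ areaNormal θ y := by
  rw [areaNormal, cross_dot_cross, det_fin_two]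
  rfl

theorem isUnit_det_metric (hy : areaNormal θ y ≠ 0) : IsUnit (metric θ y).det := by
  rw [det_metric]
  exact isUnit_iff_ne_zero.2 (mt dotProduct_self_eq_zero.1 hy)

theorem contDiffAt_metric_inv_apply (hθ : ContDiffAt ℝ (n + 1) θ y) (hy : areaNormal θ y ≠ 0)
    (σ τ : Fin 2) : ContDiffAt ℝ n (fun z => (metric θ z)⁻¹ σ τ) y := by
  have hg (α β : Fin 2) : ContDiffAt ℝ n (fun z => metric θ z α β) y :=
    (contDiffAt_covBasis hθ α).dotProduct (contDiffAt_covBasis hθ β)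
  have hdet : ContDiffAt ℝ n (fun z => ((metric θ z).det)⁻¹) y := by
    simp only [det_metric]
    have hN := contDiffAt_areaNormal hθ
    exact (hN.dotProduct hN).inv (mt dotProduct_self_eq_zero.1 hy)
  simp only [inv_def, adjugate_fin_two, Ring.inverse_eq_inv']
  fin_cases σ <;> fin_cases τ
  · simpa using hdet.mul (hg 1 1)
  · simpa using hdet.mul (hg 0 1).neg
  · simpa using hdet.mul (hg 1 0).neg
  · simpa using hdet.mul (hg 0 0)

theorem contDiffAt_contraBasis (hθ : ContDiffAt ℝ (n + 1) θ y) (hy : areaNormal θ y ≠ 0)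
    (σ : Fin 2) : ContDiffAt ℝ n (contraBasis θ σ) y :=
  ContDiffAt.sum fun τ _ => (contDiffAt_metric_inv_apply hθ hy σ τ).smul (contDiffAt_covBasis hθ τ)

theorem unitNormal_dotProduct_covBasis (y : Fin 2 → ℝ) (α : Fin 2) :
    unitNormal θ y ⬝ᵥ covBasis θ α y = 0 := by
  rw [unitNormal, smul_dotProduct, areaNormal, dotProduct_comm]
  fin_cases α <;> simp

theorem unitNormal_dotProduct_self (hy : areaNormal θ y ≠ 0) :
    unitNormal θ y ⬝ᵥ unitNormal θ y = 1 := by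
  have hpos := sum_sq_areaNormal_pos hy
  have hsq : areaNormal θ y ⬝ᵥ areaNormal θ y = ∑ i, areaNormal θ y i ^ 2 := by
    simp [dotProduct, sq]
  rw [unitNormal, smul_dotProduct, dotProduct_smul, hsq, smul_eq_mul, smul_eq_mul, ← mul_assoc,
    ← sq, inv_pow, Real.sq_sqrt hpos.le, inv_mul_cancel₀ hpos.ne']

theorem contraBasis_dotProduct_covBasis (hy : areaNormal θ y ≠ 0) (σ τ : Fin 2) :
    contraBasis θ σ y ⬝ᵥ covBasis θ τ y = (1 : Matrix (Fin 2) (Fin 2) ℝ) σ τ := by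
  rw [← nonsing_inv_mul _ (isUnit_det_metric hy), mul_apply, contraBasis, sum_dotProduct]
  simp only [smul_dotProduct, smul_eq_mul]
  rfl

theorem contraMetric_eq_inv (hy : areaNormal θ y ≠ 0) (σ τ : Fin 2) :
    contraMetric θ y σ τ = (metric θ y)⁻¹ σ τ := by
  rw [contraMetric, contraBasis.eq_def θ τ, dotProduct_sum]
  simp only [dotProduct_smul, smul_eq_mul, contraBasis_dotProduct_covBasis hy, one_apply, mul_ite,
    mul_one, mul_zero, Finset.sum_ite_eq, Finset.mem_univ, if_true]
  exact (isSymm_metric y).inv.apply σ τ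

theorem sum_metric_mul_mixedCurvature (hy : areaNormal θ y ≠ 0) (τ β : Fin 2) :
    ∑ σ, metric θ y τ σ * mixedCurvature θ y σ β = curvature θ y τ β := by
  simp only [mixedCurvature, contraMetric_eq_inv hy, Finset.mul_sum, ← mul_assoc]
  rw [Finset.sum_comm]
  simp only [← Finset.sum_mul, ← mul_apply, mul_nonsing_inv _ (isUnit_det_metric hy), one_apply,
    ite_mul, one_mul, zero_mul, Finset.sum_ite_eq, Finset.mem_univ, if_true]

theorem fderiv_unitNormal_dotProduct_covBasis (hθ : ContDiffAt ℝ 2 θ y)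
    (hy : areaNormal θ y ≠ 0) (σ β : Fin 2) :
    fderiv ℝ (unitNormal θ) y (Pi.single β 1) ⬝ᵥ covBasis θ σ y = -curvature θ y σ β := by
  have h := fderiv_dotProduct ((contDiffAt_unitNormal (n := 1) hθ hy).differentiableAt one_ne_zero)
    ((contDiffAt_covBasis (n := 1) hθ σ).differentiableAt one_ne_zero) (Pi.single β 1)
  simp only [unitNormal_dotProduct_covBasis, fderiv_const_apply, _root_.zero_apply] at h
  rw [curvature]
  linarith

theorem mixedCurvature_eq_neg_contraBasis_dotProduct (hθ : ContDiffAt ℝ 2 θ y)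
    (hy : areaNormal θ y ≠ 0) (σ β : Fin 2) :
    mixedCurvature θ y σ β = -(contraBasis θ σ y ⬝ᵥ fderiv ℝ (unitNormal θ) y (Pi.single β 1)) := by
  simp only [mixedCurvature, contraBasis, sum_dotProduct, smul_dotProduct, smul_eq_mul,
    dotProduct_comm (covBasis θ _ y), fderiv_unitNormal_dotProduct_covBasis hθ hy,
    contraMetric_eq_inv hy, ← Finset.sum_neg_distrib]
  simp

theorem fderiv_unitNormal_dotProduct_unitNormal (hθ : ContDiffAt ℝ 2 θ y)
    (hy : areaNormal θ y ≠ 0) (β : Fin 2) :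
    fderiv ℝ (unitNormal θ) y (Pi.single β 1) ⬝ᵥ unitNormal θ y = 0 := by
  have hn := (contDiffAt_unitNormal (n := 1) hθ hy).differentiableAt one_ne_zero
  have hconst : (fun z => unitNormal θ z ⬝ᵥ unitNormal θ z) =ᶠ[𝓝 y] fun _ => 1 :=
    (eventually_areaNormal_ne_zero (hθ.of_le (by norm_num)) hy).mono
      fun z hz => unitNormal_dotProduct_self hz
  have h := fderiv_dotProduct hn hn (Pi.single β 1)
  rw [hconst.fderiv_eq, fderiv_const_apply, _root_.zero_apply,
    dotProduct_comm (unitNormal θ y)] at h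
  linarith

/-- The Weingarten formula. -/
theorem fderiv_unitNormal (hθ : ContDiffAt ℝ 2 θ y) (hy : areaNormal θ y ≠ 0) (β : Fin 2) :
    fderiv ℝ (unitNormal θ) y (Pi.single β 1) = -∑ σ, mixedCurvature θ y σ β • covBasis θ σ y := by
  rw [← sub_eq_zero, sub_neg_eq_add]
  set w :=
    fderiv ℝ (unitNormal θ) y (Pi.single β 1) + ∑ σ, mixedCurvature θ y σ β • covBasis θ σ y
  have hw (τ : Fin 2) : covBasis θ τ y ⬝ᵥ w = 0 := by
    rw [dotProduct_add, dotProduct_comm, fderiv_unitNormal_dotProduct_covBasis hθ hy,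
      dotProduct_sum]
    simp only [dotProduct_smul, smul_eq_mul, mul_comm (mixedCurvature θ y _ β)]
    rw [← sum_metric_mul_mixedCurvature hy]
    simp only [metric, of_apply, neg_add_cancel]
  have hn : unitNormal θ y ⬝ᵥ w = 0 := by
    rw [dotProduct_add, dotProduct_comm, fderiv_unitNormal_dotProduct_unitNormal hθ hy,
      dotProduct_sum]
    simp [unitNormal_dotProduct_covBasis]
  rw [unitNormal, smul_dotProduct, smul_eq_mul, mul_eq_zero] at hn
  exact eq_zero_of_dotProduct_eq_zero_of_crossProduct_ne_zero (hw 0) (hw 1)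
    (hn.resolve_left (inv_ne_zero (Real.sqrt_pos.2 (sum_sq_areaNormal_pos hy)).ne')) hy

theorem fderiv_covBasis_comm (hθ : ContDiffAt ℝ 2 θ y) (α β : Fin 2) :
    fderiv ℝ (covBasis θ α) y (Pi.single β 1) = fderiv ℝ (covBasis θ β) y (Pi.single α 1) :=
  fderiv_fderiv_comm hθ _ _

theorem christoffel_comm (hθ : ContDiffAt ℝ 2 θ y) (σ α β : Fin 2) :
    christoffel θ y σ α β = christoffel θ y σ β α := by
  rw [christoffel, christoffel, fderiv_covBasis_comm hθ]

theorem fderiv_contraBasis_dotProduct_covBasis (hθ : ContDiffAt ℝ 2 θ y)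
    (hy : areaNormal θ y ≠ 0) (τ σ β : Fin 2) :
    fderiv ℝ (contraBasis θ τ) y (Pi.single β 1) ⬝ᵥ covBasis θ σ y = -christoffel θ y τ σ β := by
  have hconst : (fun z => contraBasis θ τ z ⬝ᵥ covBasis θ σ z) =ᶠ[𝓝 y]
      fun _ => (1 : Matrix (Fin 2) (Fin 2) ℝ) τ σ :=
    (eventually_areaNormal_ne_zero (hθ.of_le (by norm_num)) hy).mono
      fun z hz => contraBasis_dotProduct_covBasis hz τ σ
  have h := fderiv_dotProduct
    ((contDiffAt_contraBasis (n := 1) hθ hy τ).differentiableAt one_ne_zero)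
    ((contDiffAt_covBasis (n := 1) hθ σ).differentiableAt one_ne_zero) (Pi.single β 1)
  rw [hconst.fderiv_eq, fderiv_const_apply, _root_.zero_apply] at h
  rw [christoffel]
  linarith

theorem contDiffAt_mixedCurvature (hθ : ContDiffAt ℝ (n + 2) θ y) (hy : areaNormal θ y ≠ 0)
    (σ α : Fin 2) : ContDiffAt ℝ n (fun z => mixedCurvature θ z σ α) y := by
  have hθ' : ContDiffAt ℝ (n + 1 + 1) θ y := by rwa [add_assoc, one_add_one_eq_two]
  have hA (ρ : Fin 2) : ContDiffAt ℝ n (contraBasis θ ρ) y :=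
    (contDiffAt_contraBasis hθ' hy ρ).of_le le_self_add
  have hb (ρ : Fin 2) : ContDiffAt ℝ n (fun z => curvature θ z ρ α) y :=
    ((contDiffAt_unitNormal hθ' hy).of_le le_self_add).dotProduct
      (((contDiffAt_covBasis hθ' ρ).fderiv_right le_rfl).clm_apply contDiffAt_const)
  exact ContDiffAt.sum fun ρ _ => ((hA σ).dotProduct (hA ρ)).mul (hb ρ)

theorem fderiv_mixedCurvature_add (hθ : ContDiffAt ℝ 3 θ y) (hy : areaNormal θ y ≠ 0)
    (τ α β : Fin 2) :
    fderiv ℝ (fun z => mixedCurvature θ z τ β) y (Pi.single α 1)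
        + ∑ σ, christoffel θ y τ α σ * mixedCurvature θ y σ β
      = -(contraBasis θ τ y ⬝ᵥ
          fderiv ℝ (fun z => fderiv ℝ (unitNormal θ) z (Pi.single β 1)) y (Pi.single α 1)) := by
  have hθ2 : ContDiffAt ℝ 2 θ y := hθ.of_le (by norm_num)
  have hev : (fun z => mixedCurvature θ z τ β) =ᶠ[𝓝 y]
      fun z => -(contraBasis θ τ z ⬝ᵥ fderiv ℝ (unitNormal θ) z (Pi.single β 1)) :=
    ((hθ2.eventually (by simp)).and
      (eventually_areaNormal_ne_zero (hθ.of_le (by norm_num)) hy)).mono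
      fun z hz => mixedCurvature_eq_neg_contraBasis_dotProduct hz.1 hz.2 τ β
  have hA := (contDiffAt_contraBasis (n := 1) hθ2 hy τ).differentiableAt one_ne_zero
  have hN : DifferentiableAt ℝ (fun z => fderiv ℝ (unitNormal θ) z (Pi.single β 1)) y :=
    (((contDiffAt_unitNormal (n := 2) hθ hy).fderiv_right (m := 1) le_rfl).differentiableAt
      one_ne_zero).clm_apply (differentiableAt_const _)
  rw [hev.fderiv_eq, fderiv_fun_neg, _root_.neg_apply, fderiv_dotProduct hA hN,
    fderiv_unitNormal hθ2 hy β, dotProduct_neg, dotProduct_sum]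
  simp only [dotProduct_smul, smul_eq_mul, fderiv_contraBasis_dotProduct_covBasis hθ2 hy,
    christoffel_comm hθ2 τ _ α]
  simp only [mul_comm (mixedCurvature θ y _ β), neg_mul, Finset.sum_neg_distrib]
  ring

/-- The Codazzi–Mainardi equations. -/
theorem covDerivMixedCurvature_comm (hθ : ContDiffAt ℝ 3 θ y) (hy : areaNormal θ y ≠ 0)
    (τ α β : Fin 2) : covDerivMixedCurvature θ y τ β α = covDerivMixedCurvature θ y τ α β := by
  have hθ2 : ContDiffAt ℝ 2 θ y := hθ.of_le (by norm_num)
  have hαβ := fderiv_mixedCurvature_add hθ hy τ α β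
  have hβα := fderiv_mixedCurvature_add hθ hy τ β α
  rw [fderiv_fderiv_comm (contDiffAt_unitNormal (n := 2) hθ hy)] at hαβ
  rw [covDerivMixedCurvature, covDerivMixedCurvature]
  simp only [christoffel_comm hθ2 _ β α]
  linear_combination hαβ - hβα

theorem contDiffAt_rotation (hθ : ContDiffAt ℝ (n + 2) θ y) (hy : areaNormal θ y ≠ 0)
    (hη : ∀ σ, ContDiffAt ℝ n (η σ) y) (hη₃ : ContDiffAt ℝ (n + 1) η₃ y) (α : Fin 2) :
    ContDiffAt ℝ n (rotation θ η η₃ α) y :=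
  ((hη₃.fderiv_right le_rfl).clm_apply contDiffAt_const).add (contDiffAt_const.mul
    (ContDiffAt.sum fun σ _ => (contDiffAt_mixedCurvature hθ hy σ α).mul (hη σ)))

theorem fderiv_rotation (hθ : ContDiffAt ℝ 3 θ y) (hy : areaNormal θ y ≠ 0)
    (hη : ∀ σ, DifferentiableAt ℝ (η σ) y) (hη₃ : ContDiffAt ℝ 2 η₃ y) (α β : Fin 2) :
    fderiv ℝ (rotation θ η η₃ α) y (Pi.single β 1)
      = fderiv ℝ (fun z => fderiv ℝ η₃ z (Pi.single α 1)) y (Pi.single β 1)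
        + 2 * ∑ σ, (mixedCurvature θ y σ α * fderiv ℝ (η σ) y (Pi.single β 1)
          + η σ y * fderiv ℝ (fun z => mixedCurvature θ z σ α) y (Pi.single β 1)) := by
  have hb (σ : Fin 2) : DifferentiableAt ℝ (fun z => mixedCurvature θ z σ α) y :=
    (contDiffAt_mixedCurvature (n := 1) hθ hy σ α).differentiableAt one_ne_zero
  have h₃ : DifferentiableAt ℝ (fun z => fderiv ℝ η₃ z (Pi.single α 1)) y :=
    ((hη₃.fderiv_right (m := 1) le_rfl).differentiableAt one_ne_zero).clm_apply
      (differentiableAt_const _)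
  have hs : DifferentiableAt ℝ (fun z => ∑ σ, mixedCurvature θ z σ α * η σ z) y :=
    DifferentiableAt.fun_sum fun σ _ => (hb σ).mul (hη σ)
  unfold rotation
  rw [fderiv_fun_add h₃ (hs.const_mul 2), fderiv_const_mul hs,
    fderiv_fun_sum fun σ _ => (hb σ).fun_mul (hη σ)]
  simp only [_root_.add_apply, _root_.smul_apply, smul_eq_mul, _root_.sum_apply,
    fderiv_fun_mul (hb _) (hη _)]

theorem changeOfMetric_sub_mul {ϑ : Fin 2 → (Fin 2 → ℝ) → ℝ}
    (hη : ∀ σ, DifferentiableAt ℝ (η σ) y) (hϑ : ∀ σ, DifferentiableAt ℝ (ϑ σ) y) (t : ℝ)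
    (α β : Fin 2) :
    changeOfMetric θ (fun σ z => η σ z - t * ϑ σ z) η₃ y α β
      = changeOfMetric θ η η₃ y α β - t * changeOfMetric θ ϑ 0 y α β := by
  simp only [changeOfMetric, fderiv_fun_sub (hη _) ((hϑ _).const_mul t),
    fderiv_const_mul (hϑ _)]
  simp only [_root_.sub_apply, _root_.smul_apply, smul_eq_mul, Pi.zero_apply, mul_zero, sub_zero,
    mul_sub, Finset.sum_sub_distrib, Finset.mul_sum, mul_left_comm t]
  ring

theorem changeOfMetric_rotation (hθ : ContDiffAt ℝ 3 θ y) (hy : areaNormal θ y ≠ 0)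
    (hη : ∀ σ, DifferentiableAt ℝ (η σ) y) (hη₃ : ContDiffAt ℝ 2 η₃ y) (α β : Fin 2) :
    changeOfMetric θ (rotation θ η η₃) 0 y α β
      = changeOfCurvature θ η η₃ y α β + ∑ σ, covDerivMixedCurvature θ y σ β α * η σ y
        + (∑ σ, mixedCurvature θ y σ α * curvature θ y σ β) * η₃ y := by
  have hθ2 : ContDiffAt ℝ 2 θ y := hθ.of_le (by norm_num)
  have hcod (τ : Fin 2) := covDerivMixedCurvature_comm hθ hy τ α β
  have hhess := fderiv_fderiv_comm hη₃ (Pi.single α 1) (Pi.single β 1)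
  rw [changeOfMetric, changeOfCurvature, fderiv_rotation hθ hy hη hη₃,
    fderiv_rotation hθ hy hη hη₃]
  simp only [covDerivMixedCurvature, rotation, christoffel_comm hθ2 _ β α, Fin.sum_univ_two,
    Pi.zero_apply] at hcod ⊢
  linear_combination (-η 0 y) * hcod 0 - η 1 y * hcod 1 + (1 / 2) * hhess

theorem changeOfMetric_sub_mul_rotation (hθ : ContDiffAt ℝ 3 θ y) (hy : areaNormal θ y ≠ 0)
    (hη : ∀ σ, ContDiffAt ℝ 2 (η σ) y) (hη₃ : ContDiffAt ℝ 2 η₃ y) (t : ℝ) (α β : Fin 2) :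
    changeOfMetric θ (fun σ z => η σ z - t * rotation θ η η₃ σ z) η₃ y α β
      = changeOfMetric θ η η₃ y α β - t * (changeOfCurvature θ η η₃ y α β
        + ∑ σ, covDerivMixedCurvature θ y σ β α * η σ y
        + (∑ σ, mixedCurvature θ y σ α * curvature θ y σ β) * η₃ y) := by
  have hηd (σ : Fin 2) := (hη σ).differentiableAt two_ne_zero
  have hrot (σ : Fin 2) : DifferentiableAt ℝ (rotation θ η η₃ σ) y :=
    (contDiffAt_rotation (n := 1) hθ hy (fun σ => (hη σ).of_le one_le_two) hη₃ σ).differentiableAt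
      one_ne_zero
  rw [changeOfMetric_sub_mul hηd hrot, changeOfMetric_rotation hθ hy hηd hη₃]

end

end MiddleSurface

open MiddleSurface

theorem stmt17_general (ω : Set (Fin 2 → ℝ)) (hωo : IsOpen ω)
    (U : Set (Fin 2 → ℝ)) (hUo : IsOpen U) (hωU : closure ω ⊆ U)
    (θ : (Fin 2 → ℝ) → Fin 3 → ℝ) (hθ : ContDiffOn ℝ 3 θ U)
    (a : Fin 2 → (Fin 2 → ℝ) → Fin 3 → ℝ)
    (ha : ∀ α y, a α y = fderiv ℝ θ y (Pi.single α 1))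
    (hind : ∀ y ∈ closure ω, LinearIndependent ℝ ![a 0 y, a 1 y])
    (c : (Fin 2 → ℝ) → Fin 3 → ℝ)
    (hc : ∀ y, c y = ![a 0 y 1 * a 1 y 2 - a 0 y 2 * a 1 y 1,
                       a 0 y 2 * a 1 y 0 - a 0 y 0 * a 1 y 2,
                       a 0 y 0 * a 1 y 1 - a 0 y 1 * a 1 y 0])
    (a3 : (Fin 2 → ℝ) → Fin 3 → ℝ)
    (ha3 : ∀ y, a3 y = (Real.sqrt (∑ i, c y i ^ 2))⁻¹ • c y)
    (amat : (Fin 2 → ℝ) → Matrix (Fin 2) (Fin 2) ℝ)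
    (hamat : ∀ y α β, amat y α β = ∑ m, a α y m * a β y m)
    (acon : Fin 2 → (Fin 2 → ℝ) → Fin 3 → ℝ)
    (hacon : ∀ σ y, acon σ y = ∑ τ, (amat y)⁻¹ σ τ • a τ y)
    (ainv : (Fin 2 → ℝ) → Fin 2 → Fin 2 → ℝ)
    (hainv : ∀ y α β, ainv y α β = ∑ m, acon α y m * acon β y m)
    (bcov : (Fin 2 → ℝ) → Fin 2 → Fin 2 → ℝ)
    (hbcov : ∀ y α β, bcov y α β = ∑ m, a3 y m * fderiv ℝ (a α) y (Pi.single β 1) m)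
    (bmix : (Fin 2 → ℝ) → Fin 2 → Fin 2 → ℝ)
    (hbmix : ∀ y σ α, bmix y σ α = ∑ τ, ainv y σ τ * bcov y τ α)
    (Gam2 : (Fin 2 → ℝ) → Fin 2 → Fin 2 → Fin 2 → ℝ)
    (hGam2 : ∀ y σ α β, Gam2 y σ α β = ∑ m, acon σ y m * fderiv ℝ (a α) y (Pi.single β 1) m)
    (bder : (Fin 2 → ℝ) → Fin 2 → Fin 2 → Fin 2 → ℝ)
    (hbder : ∀ y σ β α, bder y σ β α = fderiv ℝ (fun z => bmix z σ β) y (Pi.single α 1)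
      + (∑ τ, Gam2 y σ α τ * bmix y τ β) - ∑ τ, Gam2 y τ α β * bmix y σ τ)
    (ηh : Fin 2 → (Fin 2 → ℝ) → ℝ) (η3 : (Fin 2 → ℝ) → ℝ)
    (hηh : ∀ α, ContDiffOn ℝ 2 (ηh α) (closure ω)) (hη3 : ContDiffOn ℝ 2 η3 (closure ω))
    (γη : (Fin 2 → ℝ) → Fin 2 → Fin 2 → ℝ)
    (hγη : ∀ y α β, γη y α β = (1 / 2) * (fderiv ℝ (ηh α) y (Pi.single β 1)
        + fderiv ℝ (ηh β) y (Pi.single α 1))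
      - (∑ σ, Gam2 y σ α β * ηh σ y) - bcov y α β * η3 y)
    (hγ0 : ∀ y ∈ ω, ∀ α β : Fin 2, γη y α β = 0)
    (θv : Fin 2 → (Fin 2 → ℝ) → ℝ)
    (hθv : ∀ α y, θv α y = fderiv ℝ η3 y (Pi.single α 1) + 2 * ∑ σ, bmix y σ α * ηh σ y)
    (vh : ℝ → ℝ → Fin 2 → (Fin 2 → ℝ) → ℝ)
    (hvh : ∀ ε x₃ α y, vh ε x₃ α y = ηh α y - ε * x₃ * θv α y)
    (ρη : (Fin 2 → ℝ) → Fin 2 → Fin 2 → ℝ)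
    (hρη : ∀ y α β, ρη y α β =
      fderiv ℝ (fun z => fderiv ℝ η3 z (Pi.single β 1)) y (Pi.single α 1)
      - (∑ σ, Gam2 y σ α β * fderiv ℝ η3 y (Pi.single σ 1))
      - (∑ σ, bmix y σ α * bcov y σ β) * η3 y
      + (∑ σ, bmix y σ α * (fderiv ℝ (ηh σ) y (Pi.single β 1) - ∑ τ, Gam2 y τ β σ * ηh τ y))
      + (∑ τ, bmix y τ β * (fderiv ℝ (ηh τ) y (Pi.single α 1) - ∑ σ, Gam2 y σ α τ * ηh σ y))
      + ∑ τ, bder y τ β α * ηh τ y)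
    (γv : ℝ → ℝ → (Fin 2 → ℝ) → Fin 2 → Fin 2 → ℝ)
    (hγv : ∀ ε x₃ y α β, γv ε x₃ y α β = (1 / 2) * (fderiv ℝ (vh ε x₃ α) y (Pi.single β 1)
        + fderiv ℝ (vh ε x₃ β) y (Pi.single α 1))
      - (∑ σ, Gam2 y σ α β * vh ε x₃ σ y) - bcov y α β * η3 y) :
    ∀ ε : ℝ, 0 < ε → ∀ y ∈ ω, ∀ x₃ ∈ Ioo (-1 : ℝ) 1, ∀ α β : Fin 2,
      (1 / ε) * γv ε x₃ y α β + x₃ * (∑ σ, bder y σ β α * vh ε x₃ σ y)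
        + x₃ * (∑ σ, bmix y σ α * bcov y σ β) * η3 y
      = -x₃ * ρη y α β - ε * x₃ ^ 2 * ∑ σ, bder y σ β α * θv σ y := by
  intro ε hε y hy x₃ _ α β
  obtain rfl : a = covBasis θ := funext₂ ha
  obtain rfl : c = areaNormal θ := funext hc
  obtain rfl : a3 = unitNormal θ := funext ha3
  obtain rfl : amat = metric θ := funext fun y => Matrix.ext (hamat y)
  obtain rfl : acon = contraBasis θ := funext₂ hacon
  obtain rfl : ainv = contraMetric θ := funext₃ hainv
  obtain rfl : bcov = curvature θ := funext₃ hbcov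
  obtain rfl : bmix = mixedCurvature θ := funext₃ hbmix
  obtain rfl : Gam2 = christoffel θ := funext fun y => funext₃ (hGam2 y)
  obtain rfl : bder = covDerivMixedCurvature θ := funext fun y => funext₃ (hbder y)
  obtain rfl : θv = rotation θ ηh η3 := funext₂ hθv
  obtain rfl : γη = changeOfMetric θ ηh η3 := funext₃ hγη
  obtain rfl : ρη = changeOfCurvature θ ηh η3 := funext₃ hρη
  have hθy : ContDiffAt ℝ 3 θ y := hθ.contDiffAt (hUo.mem_nhds (hωU (subset_closure hy)))
  have hNy : areaNormal θ y ≠ 0 :=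
    crossProduct_ne_zero_iff_linearIndependent.2 (hind y (subset_closure hy))
  have hηy (σ : Fin 2) : ContDiffAt ℝ 2 (ηh σ) y :=
    ((hηh σ).mono subset_closure).contDiffAt (hωo.mem_nhds hy)
  have hη3y : ContDiffAt ℝ 2 η3 y := (hη3.mono subset_closure).contDiffAt (hωo.mem_nhds hy)
  have hv : vh ε x₃ = fun σ z => ηh σ z - ε * x₃ * rotation θ ηh η3 σ z := funext₂ (hvh ε x₃)
  have hγv' : γv ε x₃ y α β = changeOfMetric θ (vh ε x₃) η3 y α β := hγv ε x₃ y α β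
  rw [hγv', hv, changeOfMetric_sub_mul_rotation hθy hNy hηy hη3y, hγ0 y hy α β]
  simp only [Fin.sum_univ_two]
  field_simp
  ring

/-- Scaled strain identity for the Miara–Sanchez-Palencia test functions associated with
an inextensional displacement `η` of the middle surface:
`(1/ε) γ_{αβ}(v(ε)) + x₃ b^σ_{β|α} v_σ(ε) + x₃ b^σ_α b_{σβ} v₃(ε)
  = − x₃ ρ_{αβ}(η) − ε x₃² b^σ_{β|α} θ_σ`. -/
theorem stmt17 (ω : Set (Fin 2 → ℝ)) (hωo : IsOpen ω) (hωb : Bornology.IsBounded ω)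
    (hωc : IsConnected ω)
    (U : Set (Fin 2 → ℝ)) (hUo : IsOpen U) (hωU : closure ω ⊆ U)
    (θ : (Fin 2 → ℝ) → Fin 3 → ℝ) (hθ : ContDiffOn ℝ 3 θ U) (hθinj : InjOn θ (closure ω))
    (a : Fin 2 → (Fin 2 → ℝ) → Fin 3 → ℝ)
    (ha : ∀ α y, a α y = fderiv ℝ θ y (Pi.single α 1))
    (hind : ∀ y ∈ closure ω, LinearIndependent ℝ ![a 0 y, a 1 y])
    (c : (Fin 2 → ℝ) → Fin 3 → ℝ)
    (hc : ∀ y, c y = ![a 0 y 1 * a 1 y 2 - a 0 y 2 * a 1 y 1,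
                       a 0 y 2 * a 1 y 0 - a 0 y 0 * a 1 y 2,
                       a 0 y 0 * a 1 y 1 - a 0 y 1 * a 1 y 0])
    (a3 : (Fin 2 → ℝ) → Fin 3 → ℝ)
    (ha3 : ∀ y, a3 y = (Real.sqrt (∑ i, c y i ^ 2))⁻¹ • c y)
    (amat : (Fin 2 → ℝ) → Matrix (Fin 2) (Fin 2) ℝ)
    (hamat : ∀ y α β, amat y α β = ∑ m, a α y m * a β y m)
    (acon : Fin 2 → (Fin 2 → ℝ) → Fin 3 → ℝ)
    (hacon : ∀ σ y, acon σ y = ∑ τ, (amat y)⁻¹ σ τ • a τ y)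
    (ainv : (Fin 2 → ℝ) → Fin 2 → Fin 2 → ℝ)
    (hainv : ∀ y α β, ainv y α β = ∑ m, acon α y m * acon β y m)
    (bcov : (Fin 2 → ℝ) → Fin 2 → Fin 2 → ℝ)
    (hbcov : ∀ y α β, bcov y α β = ∑ m, a3 y m * fderiv ℝ (a α) y (Pi.single β 1) m)
    (bmix : (Fin 2 → ℝ) → Fin 2 → Fin 2 → ℝ)
    (hbmix : ∀ y σ α, bmix y σ α = ∑ τ, ainv y σ τ * bcov y τ α)
    (Gam2 : (Fin 2 → ℝ) → Fin 2 → Fin 2 → Fin 2 → ℝ)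
    (hGam2 : ∀ y σ α β, Gam2 y σ α β = ∑ m, acon σ y m * fderiv ℝ (a α) y (Pi.single β 1) m)
    (bder : (Fin 2 → ℝ) → Fin 2 → Fin 2 → Fin 2 → ℝ)
    (hbder : ∀ y σ β α, bder y σ β α = fderiv ℝ (fun z => bmix z σ β) y (Pi.single α 1)
      + (∑ τ, Gam2 y σ α τ * bmix y τ β) - ∑ τ, Gam2 y τ α β * bmix y σ τ)
    (ηh : Fin 2 → (Fin 2 → ℝ) → ℝ) (η3 : (Fin 2 → ℝ) → ℝ)
    (hηh : ∀ α, ContDiffOn ℝ 2 (ηh α) (closure ω)) (hη3 : ContDiffOn ℝ 2 η3 (closure ω))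
    (γη : (Fin 2 → ℝ) → Fin 2 → Fin 2 → ℝ)
    (hγη : ∀ y α β, γη y α β = (1 / 2) * (fderiv ℝ (ηh α) y (Pi.single β 1)
        + fderiv ℝ (ηh β) y (Pi.single α 1))
      - (∑ σ, Gam2 y σ α β * ηh σ y) - bcov y α β * η3 y)
    (hγ0 : ∀ y ∈ ω, ∀ α β : Fin 2, γη y α β = 0)
    (θv : Fin 2 → (Fin 2 → ℝ) → ℝ)
    (hθv : ∀ α y, θv α y = fderiv ℝ η3 y (Pi.single α 1) + 2 * ∑ σ, bmix y σ α * ηh σ y)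
    (vh : ℝ → ℝ → Fin 2 → (Fin 2 → ℝ) → ℝ)
    (hvh : ∀ ε x₃ α y, vh ε x₃ α y = ηh α y - ε * x₃ * θv α y)
    (ρη : (Fin 2 → ℝ) → Fin 2 → Fin 2 → ℝ)
    (hρη : ∀ y α β, ρη y α β =
      fderiv ℝ (fun z => fderiv ℝ η3 z (Pi.single β 1)) y (Pi.single α 1)
      - (∑ σ, Gam2 y σ α β * fderiv ℝ η3 y (Pi.single σ 1))
      - (∑ σ, bmix y σ α * bcov y σ β) * η3 y
      + (∑ σ, bmix y σ α * (fderiv ℝ (ηh σ) y (Pi.single β 1) - ∑ τ, Gam2 y τ β σ * ηh τ y))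
      + (∑ τ, bmix y τ β * (fderiv ℝ (ηh τ) y (Pi.single α 1) - ∑ σ, Gam2 y σ α τ * ηh σ y))
      + ∑ τ, bder y τ β α * ηh τ y)
    (γv : ℝ → ℝ → (Fin 2 → ℝ) → Fin 2 → Fin 2 → ℝ)
    (hγv : ∀ ε x₃ y α β, γv ε x₃ y α β = (1 / 2) * (fderiv ℝ (vh ε x₃ α) y (Pi.single β 1)
        + fderiv ℝ (vh ε x₃ β) y (Pi.single α 1))
      - (∑ σ, Gam2 y σ α β * vh ε x₃ σ y) - bcov y α β * η3 y) :
    ∀ ε : ℝ, 0 < ε → ∀ y ∈ ω, ∀ x₃ ∈ Ioo (-1 : ℝ) 1, ∀ α β : Fin 2,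
      (1 / ε) * γv ε x₃ y α β + x₃ * (∑ σ, bder y σ β α * vh ε x₃ σ y)
        + x₃ * (∑ σ, bmix y σ α * bcov y σ β) * η3 y
      = -x₃ * ρη y α β - ε * x₃ ^ 2 * ∑ σ, bder y σ β α * θv σ y :=
  stmt17_general ω hωo U hUo hωU θ hθ a ha hind c hc a3 ha3 amat hamat acon hacon ainv hainv bcov
    hbcov bmix hbmix Gam2 hGam2 bder hbder ηh η3 hηh hη3 γη hγη hγ0 θv hθv vh hvh ρη hρη γv hγv
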